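/- arXiv:2405.09811 — 2 statements merged into one kernel-verified Lean document; each statement's English description precedes it below -/
import Mathlib

section
/- For all policy profiles π, π' ∈ Π, the stationary distributions satisfy ‖p_π − p_{π'}‖₁ ≤ ((2^n − 1)|A||S| / (1 − e^{−1/τ})) · ‖π − π'‖_∞. -/
open Matrix BigOperators

noncomputable section

variable {n : ℕ} {S : Type} [Fintype S] [DecidableEq S]
  {A : Fin n → Type} [∀ i, Fintype (A i)] [∀ i, DecidableEq (A i)]

/-- A stationary policy profile: each player `i` assigns to each state a
probability distribution on her action set `A i`. -/
def IsPolicyProfile (π : ∀ i : Fin n, S → A i → ℝ) : Prop :=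
  (∀ i s a, 0 ≤ π i s a) ∧ (∀ i s, ∑ a, π i s a = 1)

/-- Transition probabilities `ℙ[s' | s, a]`. -/
def IsTransition (T : S → (∀ i, A i) → S → ℝ) : Prop :=
  (∀ s a s', 0 ≤ T s a s') ∧ (∀ s a, ∑ s', T s a s' = 1)

/-- A probability distribution on `S` (as a row vector). -/
def IsDist (w : S → ℝ) : Prop := (∀ s, 0 ≤ w s) ∧ ∑ s, w s = 1

/-- The transition matrix induced by a policy profile:
`P_π(s'|s) = ∑_a ℙ[s'|s,a] ∏_j π_j(a_j|s)`. -/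
def Pmat (T : S → (∀ i, A i) → S → ℝ) (π : ∀ i : Fin n, S → A i → ℝ) :
    Matrix S S ℝ :=
  fun s s' => ∑ a : ∀ i, A i, T s a s' * ∏ i, π i s (a i)

/-- Sup-norm distance between two policy profiles. -/
def polDist (π π' : ∀ i : Fin n, S → A i → ℝ) : ℝ :=
  ⨆ i, ⨆ s, ⨆ a, |π i s a - π' i s a|

/-- ℓ¹-norm on ℝ^S. -/
def l1 (w : S → ℝ) : ℝ := ∑ s, |w s|

/-- The expected one-step reward vector `R_i^π`. -/
def Rvec (r : S → (∀ i, A i) → ℝ) (π : ∀ i : Fin n, S → A i → ℝ) : S → ℝ :=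
  fun s => ∑ a : ∀ i, A i, (∏ j, π j s (a j)) * r s a

/-- The long-run average value `V_i(π) = ∑_s p_π(s) R_i^π(s)`, where `p` is the
stationary distribution of `P_π`. -/
def Vval (p : S → ℝ) (R : S → ℝ) : ℝ := ∑ s, p s * R s

/-- The uniform mixing assumption with mixing time `τ`. -/
def Mixing (T : S → (∀ i, A i) → S → ℝ) (τ : ℝ) : Prop :=
  ∀ π : ∀ i : Fin n, S → A i → ℝ, IsPolicyProfile π →
    ∀ w w' : S → ℝ, IsDist w → IsDist w' →
      l1 ((w - w') ᵥ* Pmat T π) ≤ Real.exp (-(1 / τ)) * l1 (w - w')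

/-- The advantage function
`adv^π_i(s,a) = r_i(s,a) − V_i(π) + ∑_{t≥1} ((e_s − p_π) P_π^t) R_i^π`. -/
def adv (T : S → (∀ i, A i) → S → ℝ) (r : S → (∀ i, A i) → ℝ)
    (π : ∀ i : Fin n, S → A i → ℝ) (p : S → ℝ) (s : S) (a : ∀ i, A i) : ℝ :=
  r s a - Vval p (Rvec r π)
    + ∑' t : ℕ, ((Pi.single s 1 - p) ᵥ* (Pmat T π ^ (t + 1))) ⬝ᵥ (Rvec r π)

/-- The average advantage function
`\bar adv^π_i(s, a_i) = ∑_{a_{-i}} (∏_{j≠i} π_j(a_j|s)) adv^π_i(s,(a_i,a_{-i}))`. -/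
def avgAdv (T : S → (∀ i, A i) → S → ℝ) (r : S → (∀ i, A i) → ℝ)
    (π : ∀ i : Fin n, S → A i → ℝ) (p : S → ℝ) (i : Fin n) (s : S) (ai : A i) : ℝ :=
  ∑ a : ∀ j, A j,
    if a i = ai then (∏ j ∈ Finset.univ.erase i, π j s (a j)) * adv T r π p s a
    else 0

/-
Subtracting the two stationarity equations gives `p - p' = (p - p') P_π + p' (P_π - P_π')`.
Mixing contracts the first term by `e^{-1/τ}`, so `‖p - p'‖₁ ≤ ‖p' (P_π - P_π')‖₁ / (1 - e^{-1/τ})`.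
Every row of `P_π - P_π'` has ℓ¹-mass at most `|A| · n · ‖π - π'‖_∞`, since a product of numbers in
`[0, 1]` moves by at most the sum of the moves of its factors; finally `n ≤ 2^n - 1` and `1 ≤ |S|`.
-/

theorem norm_prod_sub_prod_le_sum_norm_sub {ι R : Type*} [NormedCommRing R] [NormOneClass R]
    (t : Finset ι) {f g : ι → R} (hf : ∀ i ∈ t, ‖f i‖ ≤ 1) (hg : ∀ i ∈ t, ‖g i‖ ≤ 1) :
    ‖∏ i ∈ t, f i - ∏ i ∈ t, g i‖ ≤ ∑ i ∈ t, ‖f i - g i‖ := by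
  classical
  induction t using Finset.induction_on with
  | empty => simp
  | insert a s ha ih =>
    simp only [Finset.forall_mem_insert] at hf hg
    have hprod : ‖∏ i ∈ s, f i‖ ≤ 1 :=
      (Finset.norm_prod_le s f).trans (Finset.prod_le_one (fun _ _ => norm_nonneg _) hf.2)
    rw [Finset.prod_insert ha, Finset.prod_insert ha, Finset.sum_insert ha]
    calc ‖f a * ∏ i ∈ s, f i - g a * ∏ i ∈ s, g i‖
        = ‖(f a - g a) * ∏ i ∈ s, f i + g a * (∏ i ∈ s, f i - ∏ i ∈ s, g i)‖ := by ring_nf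
      _ ≤ ‖f a - g a‖ * ‖∏ i ∈ s, f i‖ + ‖g a‖ * ‖∏ i ∈ s, f i - ∏ i ∈ s, g i‖ :=
        (norm_add_le _ _).trans (add_le_add (norm_mul_le _ _) (norm_mul_le _ _))
      _ ≤ ‖f a - g a‖ * 1 + 1 * ∑ i ∈ s, ‖f i - g i‖ := by
        gcongr
        exacts [hg.1, ih hf.2 hg.2]
      _ = ‖f a - g a‖ + ∑ i ∈ s, ‖f i - g i‖ := by ring

theorem l1_add_le {ι : Type} [Fintype ι] (u v : ι → ℝ) : l1 (u + v) ≤ l1 u + l1 v := by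
  rw [l1, l1, l1, ← Finset.sum_add_distrib]
  exact Finset.sum_le_sum fun s _ => abs_add_le (u s) (v s)

theorem l1_vecMul_le {ι κ : Type} [Fintype ι] [Fintype κ] (w : ι → ℝ) (M : Matrix ι κ ℝ) {B : ℝ}
    (hM : ∀ s, l1 (M s) ≤ B) : l1 (w ᵥ* M) ≤ l1 w * B := by
  calc l1 (w ᵥ* M) ≤ ∑ s', ∑ s, |w s| * |M s s'| := by
        refine Finset.sum_le_sum fun s' _ => ?_
        simp only [vecMul, dotProduct, ← abs_mul]
        exact Finset.abs_sum_le_sum_abs _ _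
    _ = ∑ s, |w s| * l1 (M s) := by
        rw [Finset.sum_comm]
        simp only [l1, Finset.mul_sum]
    _ ≤ ∑ s, |w s| * B := by gcongr with s; exact hM s
    _ = l1 w * B := by rw [l1, Finset.sum_mul]

theorem IsDist.l1_eq_one {ι : Type} [Fintype ι] {w : ι → ℝ} (hw : IsDist w) : l1 w = 1 := by
  rw [l1, ← hw.2]
  exact Finset.sum_congr rfl fun s _ => abs_of_nonneg (hw.1 s)

theorem l1_sub_le_of_vecMul_eq_self {ι : Type} [Fintype ι] {P P' : Matrix ι ι ℝ} {p p' : ι → ℝ}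
    {q : ℝ} (hq : q < 1)
    (hcontr : l1 ((p - p') ᵥ* P) ≤ q * l1 (p - p'))
    (hp : p ᵥ* P = p) (hp' : p' ᵥ* P' = p') :
    l1 (p - p') ≤ l1 (p' ᵥ* (P - P')) / (1 - q) := by
  have hsplit : p - p' = (p - p') ᵥ* P + p' ᵥ* (P - P') := by
    rw [sub_vecMul, vecMul_sub, hp, hp']
    abel
  have htri := (congrArg l1 hsplit).trans_le (l1_add_le ((p - p') ᵥ* P) (p' ᵥ* (P - P')))
  rw [le_div_iff₀ (sub_pos.mpr hq)]
  linarith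

omit [Fintype S] [DecidableEq S] [∀ i, DecidableEq (A i)] in
theorem IsPolicyProfile.le_one {π : ∀ i : Fin n, S → A i → ℝ} (hπ : IsPolicyProfile π)
    (i : Fin n) (s : S) (a : A i) : π i s a ≤ 1 :=
  hπ.2 i s ▸ Finset.single_le_sum (fun b _ => hπ.1 i s b) (Finset.mem_univ a)

omit [DecidableEq S] [∀ i, DecidableEq (A i)] in
theorem abs_sub_le_polDist (π π' : ∀ i : Fin n, S → A i → ℝ) (i : Fin n) (s : S) (a : A i) :
    |π i s a - π' i s a| ≤ polDist π π' :=
  le_ciSup_of_le (Finite.bddAbove_range _) i <|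
    le_ciSup_of_le (Finite.bddAbove_range _) s <|
      le_ciSup (Finite.bddAbove_range fun a => |π i s a - π' i s a|) a

omit [Fintype S] [DecidableEq S] [∀ i, Fintype (A i)] [∀ i, DecidableEq (A i)] in
theorem polDist_nonneg (π π' : ∀ i : Fin n, S → A i → ℝ) : 0 ≤ polDist π π' :=
  Real.iSup_nonneg fun _ => Real.iSup_nonneg fun _ => Real.iSup_nonneg fun _ => abs_nonneg _

omit [DecidableEq S] [∀ i, DecidableEq (A i)] in
theorem abs_prod_sub_prod_le_polDist {π π' : ∀ i : Fin n, S → A i → ℝ}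
    (hπ : IsPolicyProfile π) (hπ' : IsPolicyProfile π') (s : S) (a : ∀ i, A i) :
    |∏ i, π i s (a i) - ∏ i, π' i s (a i)| ≤ n * polDist π π' := by
  have hunit {σ : ∀ i : Fin n, S → A i → ℝ} (hσ : IsPolicyProfile σ) (i : Fin n) :
      ‖σ i s (a i)‖ ≤ 1 := by
    rw [Real.norm_of_nonneg (hσ.1 i s (a i))]
    exact hσ.le_one i s (a i)
  calc |∏ i, π i s (a i) - ∏ i, π' i s (a i)|
      ≤ ∑ i, |π i s (a i) - π' i s (a i)| :=
        norm_prod_sub_prod_le_sum_norm_sub _ (fun i _ => hunit hπ i) (fun i _ => hunit hπ' i)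
    _ ≤ ∑ _i : Fin n, polDist π π' :=
        Finset.sum_le_sum fun i _ => abs_sub_le_polDist π π' i s (a i)
    _ = n * polDist π π' := by simp

omit [DecidableEq S] [∀ i, DecidableEq (A i)] in
theorem l1_row_Pmat_sub_le {T : S → (∀ i, A i) → S → ℝ} (hT : IsTransition T)
    {π π' : ∀ i : Fin n, S → A i → ℝ} (hπ : IsPolicyProfile π) (hπ' : IsPolicyProfile π')
    (s : S) :
    l1 ((Pmat T π - Pmat T π') s) ≤ Fintype.card (∀ i, A i) * (n * polDist π π') := by
  calc l1 ((Pmat T π - Pmat T π') s)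
      ≤ ∑ s', ∑ a : ∀ i, A i, T s a s' * |∏ i, π i s (a i) - ∏ i, π' i s (a i)| := by
        refine Finset.sum_le_sum fun s' _ => ?_
        simp only [Matrix.sub_apply, Pmat, ← Finset.sum_sub_distrib, ← mul_sub]
        refine (Finset.abs_sum_le_sum_abs _ _).trans_eq (Finset.sum_congr rfl fun a _ => ?_)
        rw [abs_mul, abs_of_nonneg (hT.1 s a s')]
    _ = ∑ a : ∀ i, A i, |∏ i, π i s (a i) - ∏ i, π' i s (a i)| := by
        rw [Finset.sum_comm]
        simp only [← Finset.sum_mul, hT.2 s, one_mul]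
    _ ≤ ∑ _a : ∀ i, A i, n * polDist π π' :=
        Finset.sum_le_sum fun a _ => abs_prod_sub_prod_le_polDist hπ hπ' s a
    _ = Fintype.card (∀ i, A i) * (n * polDist π π') := by simp

/-- Lipschitz continuity of the stationary distribution in the policy profile. -/
theorem stationary_dist_lipschitz
    (T : S → (∀ i, A i) → S → ℝ) (hT : IsTransition T)
    (τ : ℝ) (hτ : 0 < τ) (hmix : Mixing T τ)
    (π π' : ∀ i : Fin n, S → A i → ℝ)
    (hπ : IsPolicyProfile π) (hπ' : IsPolicyProfile π')
    (p p' : S → ℝ) (hp : IsDist p) (hp' : IsDist p')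
    (hstat : p ᵥ* Pmat T π = p) (hstat' : p' ᵥ* Pmat T π' = p') :
    l1 (p - p') ≤
      ((2 : ℝ) ^ n - 1) * (Fintype.card (∀ i, A i) : ℝ) * (Fintype.card S : ℝ) / (1 - Real.exp (-(1 / τ))) * polDist π π' := by
  have hq : Real.exp (-(1 / τ)) < 1 := Real.exp_lt_one_iff.mpr (by simpa using hτ)
  have hn : (n + 1 : ℝ) ≤ 2 ^ n := by exact_mod_cast Nat.lt_two_pow_self
  have hS : (1 : ℝ) ≤ Fintype.card S := by
    obtain ⟨s, -, -⟩ := Finset.exists_ne_zero_of_sum_ne_zero (hp.2.trans_ne one_ne_zero)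
    exact_mod_cast Fintype.card_pos_iff.mpr ⟨s⟩
  have hconst : (n : ℝ) ≤ (2 ^ n - 1) * Fintype.card S :=
    (le_sub_iff_add_le.mpr hn).trans (le_mul_of_one_le_right (by linarith) hS)
  calc l1 (p - p') ≤ l1 (p' ᵥ* (Pmat T π - Pmat T π')) / (1 - Real.exp (-(1 / τ))) :=
        l1_sub_le_of_vecMul_eq_self hq (hmix π hπ p p' hp hp') hstat hstat'
    _ ≤ Fintype.card (∀ i, A i) * (n * polDist π π') / (1 - Real.exp (-(1 / τ))) := by
        gcongr
        simpa [hp'.l1_eq_one] using l1_vecMul_le p' _ (l1_row_Pmat_sub_le hT hπ hπ')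
    _ ≤ ((2 : ℝ) ^ n - 1) * Fintype.card (∀ i, A i) * Fintype.card S * polDist π π'
          / (1 - Real.exp (-(1 / τ))) := by
        have hd := polDist_nonneg π π'
        gcongr ?_ / _
        linear_combination (Fintype.card (∀ i, A i) * polDist π π') * hconst
    _ = _ := by ring

end
end

section
/- For every p ∈ X and all y, y' ∈ ℝ^d, the Fenchel coupling satisfies F(p, y') ≤ F(p, y) + ⟨y' − y, Q(y) − p⟩ + (1/(2K)) ‖y' − y‖². -/
open scoped RealInnerProductSpace
open Filter Topology Set

/-! Strong convexity of `h` makes `x ↦ h x - ⟪y, x⟫` grow at least like `K / 2 * ‖x - Q y‖ ^ 2`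
away from its minimiser `Q y`. Evaluated at `x = Q y'`, this growth absorbs the cross term
`⟪y' - y, Q y' - Q y⟫` by Young's inequality, which is where the constant `1 / (2 * K)` comes from.
-/

section NormedSpace

variable {E : Type*} [NormedAddCommGroup E] [NormedSpace ℝ E] {s : Set E} {m : ℝ} {f : E → ℝ}

lemma StrongConvexOn.sq_norm_sub_le_of_isMinOn (hf : StrongConvexOn s m f) {x x' : E}
    (hx : x ∈ s) (hx' : x' ∈ s) (hmin : IsMinOn f s x) :
    m / 2 * ‖x' - x‖ ^ 2 ≤ f x' - f x := by
  have hsegment : ∀ t ∈ Ioo (0 : ℝ) 1, (1 - t) * (m / 2 * ‖x' - x‖ ^ 2) ≤ f x' - f x := by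
    intro t ⟨ht0, ht1⟩
    have hconv := hf.2 hx' hx ht0.le (sub_nonneg.2 ht1.le) (add_sub_cancel t 1)
    have hle := isMinOn_iff.1 hmin _ <|
      hf.1 hx' hx ht0.le (sub_nonneg.2 ht1.le) (add_sub_cancel t 1)
    simp only [smul_eq_mul] at hconv
    have : t * ((1 - t) * (m / 2 * ‖x' - x‖ ^ 2)) ≤ t * (f x' - f x) := by nlinarith
    exact le_of_mul_le_mul_left this ht0
  have hlim : Tendsto (fun t : ℝ ↦ (1 - t) * (m / 2 * ‖x' - x‖ ^ 2)) (𝓝[>] 0)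
      (𝓝 (m / 2 * ‖x' - x‖ ^ 2)) := by
    have : Continuous fun t : ℝ ↦ (1 - t) * (m / 2 * ‖x' - x‖ ^ 2) := by fun_prop
    simpa using (this.tendsto 0).mono_left nhdsWithin_le_nhds
  exact le_of_tendsto hlim (eventually_of_mem (Ioo_mem_nhdsGT one_pos) hsegment)

end NormedSpace

section InnerProductSpace

variable {E : Type*} [NormedAddCommGroup E] [InnerProductSpace ℝ E] {s : Set E} {m : ℝ}
  {f : E → ℝ}

lemma StrongConvexOn.sub_inner (hf : StrongConvexOn s m f) (y : E) :
    StrongConvexOn s m fun x ↦ f x - ⟪y, x⟫ := by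
  have := hf.sub (uniformConcaveOn_zero.2 ((innerₛₗ ℝ y).concaveOn hf.1))
  rwa [add_zero] at this

lemma real_inner_le_sq_div_add_sq {m : ℝ} (hm : 0 < m) (u v : E) :
    ⟪u, v⟫ ≤ 1 / (2 * m) * ‖u‖ ^ 2 + m / 2 * ‖v‖ ^ 2 := by
  have : ‖u‖ * ‖v‖ ≤ 1 / (2 * m) * ‖u‖ ^ 2 + m / 2 * ‖v‖ ^ 2 := by
    have hgap : 1 / (2 * m) * ‖u‖ ^ 2 + m / 2 * ‖v‖ ^ 2 - ‖u‖ * ‖v‖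
        = (‖u‖ - m * ‖v‖) ^ 2 / (2 * m) := by
      field_simp
      ring
    linarith [show 0 ≤ (‖u‖ - m * ‖v‖) ^ 2 / (2 * m) by positivity]
  exact (real_inner_le_norm u v).trans this

lemma StrongConvexOn.inner_sub_le_of_isMaxOn (hf : StrongConvexOn s m f) (hm : 0 < m)
    {x x' : E} (hx : x ∈ s) (hx' : x' ∈ s) {y : E} (hmax : IsMaxOn (fun z ↦ ⟪y, z⟫ - f z) s x)
    (y' : E) :
    ⟪y', x'⟫ - f x' ≤ ⟪y, x⟫ - f x + ⟪y' - y, x⟫ + 1 / (2 * m) * ‖y' - y‖ ^ 2 := by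
  have hmin : IsMinOn (fun z ↦ f z - ⟪y, z⟫) s x :=
    isMinOn_iff.2 fun z hz ↦ by linarith [isMaxOn_iff.1 hmax z hz]
  have hgrowth := (hf.sub_inner y).sq_norm_sub_le_of_isMinOn hx hx' hmin
  have hyoung := real_inner_le_sq_div_add_sq hm (y' - y) (x' - x)
  simp only [inner_sub_left, inner_sub_right] at hgrowth hyoung ⊢
  linarith

end InnerProductSpace

theorem fenchel_coupling_step_bound_general {d : ℕ}
    (X : Set (EuclideanSpace ℝ (Fin d)))
    (hXconv : Convex ℝ X)
    (h : EuclideanSpace ℝ (Fin d) → ℝ) (K : ℝ) (hK : 0 < K)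
    (hsc : ∀ x ∈ X, ∀ x' ∈ X, ∀ l ∈ Set.Icc (0 : ℝ) 1,
      h (l • x + (1 - l) • x') ≤
        l * h x + (1 - l) * h x' - K / 2 * l * (1 - l) * ‖x - x'‖ ^ 2)
    (Q : EuclideanSpace ℝ (Fin d) → EuclideanSpace ℝ (Fin d))
    (hQmem : ∀ y, Q y ∈ X)
    (hQmax : ∀ y, ∀ x ∈ X, ⟪y, x⟫ - h x ≤ ⟪y, Q y⟫ - h (Q y))
    (hstar : EuclideanSpace ℝ (Fin d) → ℝ)
    (hhstar : ∀ y, hstar y = ⟪y, Q y⟫ - h (Q y))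
    (F : EuclideanSpace ℝ (Fin d) → EuclideanSpace ℝ (Fin d) → ℝ)
    (hF : ∀ p y, F p y = h p + hstar y - ⟪y, p⟫)
    (p : EuclideanSpace ℝ (Fin d))
    (y y' : EuclideanSpace ℝ (Fin d)) :
    F p y' ≤ F p y + ⟪y' - y, Q y - p⟫ + 1 / (2 * K) * ‖y' - y‖ ^ 2 := by
  have hstrong : StrongConvexOn X K h := by
    refine ⟨hXconv, fun x hx x' hx' a b ha hb hab ↦ ?_⟩
    obtain rfl : b = 1 - a := by linarith
    have := hsc x hx x' hx' a ⟨ha, by linarith⟩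
    simp only [smul_eq_mul]
    linarith
  have hconj := hstrong.inner_sub_le_of_isMaxOn hK (hQmem y) (hQmem y')
    (isMaxOn_iff.2 (hQmax y)) y'
  rw [hF, hF, hhstar, hhstar, inner_sub_right, inner_sub_left y' y p]
  linarith

/-- Second Fenchel coupling inequality:
`F(p,y') ≤ F(p,y) + ⟨y' − y, Q(y) − p⟩ + (1/(2K))‖y' − y‖²`. -/
theorem fenchel_coupling_step_bound {d : ℕ}
    (X : Set (EuclideanSpace ℝ (Fin d))) (hXc : IsCompact X)
    (hXconv : Convex ℝ X) (hXne : X.Nonempty)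
    (h : EuclideanSpace ℝ (Fin d) → ℝ) (K : ℝ) (hK : 0 < K)
    (hcont : ContinuousOn h X)
    (hsc : ∀ x ∈ X, ∀ x' ∈ X, ∀ l ∈ Set.Icc (0 : ℝ) 1,
      h (l • x + (1 - l) • x') ≤
        l * h x + (1 - l) * h x' - K / 2 * l * (1 - l) * ‖x - x'‖ ^ 2)
    (Q : EuclideanSpace ℝ (Fin d) → EuclideanSpace ℝ (Fin d))
    (hQmem : ∀ y, Q y ∈ X)
    (hQmax : ∀ y, ∀ x ∈ X, ⟪y, x⟫ - h x ≤ ⟪y, Q y⟫ - h (Q y))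
    (hstar : EuclideanSpace ℝ (Fin d) → ℝ)
    (hhstar : ∀ y, hstar y = ⟪y, Q y⟫ - h (Q y))
    (F : EuclideanSpace ℝ (Fin d) → EuclideanSpace ℝ (Fin d) → ℝ)
    (hF : ∀ p y, F p y = h p + hstar y - ⟪y, p⟫)
    (p : EuclideanSpace ℝ (Fin d)) (hp : p ∈ X)
    (y y' : EuclideanSpace ℝ (Fin d)) :
    F p y' ≤ F p y + ⟪y' - y, Q y - p⟫ + 1 / (2 * K) * ‖y' - y‖ ^ 2 :=
  fenchel_coupling_step_bound_general X hXconv h K hK hsc Q hQmem hQmax hstar hhstar F hF p y y'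
end
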